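/- Let 𝒢 = 𝒢_1 ∪ ⋯ ∪ 𝒢_l, where for each 1 ≤ i ≤ l the graph 𝒢_i has m_i connected components, each of which is a cycle of odd length k_i = 2γ_i+1. Then the regularity index of I(X*_𝒢) equals Σ_{i=1}^{l} ( m_i(k_i+γ_i)(q−1)/2 − k_i m_i ); that is, the least integer p ≥ 0 such that the affine Hilbert function satisfies H_{X*_𝒢}(d) = |X*_𝒢| for all d ≥ p is p = Σ_{i=1}^{l} ( m_i(k_i+γ_i)(q−1)/2 − k_i m_i ). -/

import Mathlib

/-!
Write `q - 1 = 2r`. The toric set `X` is a finite group under coordinatewise multiplication, so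
a monomial `t^a` restricts to a character of `X`; distinct characters are linearly independent
(Dedekind) and polynomials give all functions on `X`. Hence `H_X(d) = |X|` exactly when every
monomial agrees on `X` with one of degree at most `d`.

On `X`, `t^a` and `t^b` agree iff `w = a - b` (mod `2r`) satisfies `w_{c+1} + w_c = 0` along
each cycle. On an odd cycle this forces `w` to be constant, equal to `0` or `r`. So the
regularity index is computed cycle by cycle: shifting the exponents of a cycle by `r` or not
always brings `∑_c (a_c + 1)` down to at most `(k + γ) r`, and the exponent vector with `γ`
entries `2r - 1` and `γ + 1` entries `r - 1` cannot be brought lower.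
-/

open MvPolynomial

/-- The affine algebraic toric set parameterized by the disjoint union `𝒢 = 𝒢₁ ∪ ⋯ ∪ 𝒢_l`,
where `𝒢_i` is the disjoint union of `mf i` cycles of length `kf i`. The coordinates (one for
each edge of `𝒢`) are indexed by triples `⟨i, j, c⟩` (the `c`-th edge of the `j`-th cycle of
`𝒢_i`), the coordinate at `⟨i, j, c⟩` being `x ⟨i, j, c⟩ * x ⟨i, j, c+1⟩` with the edge index
taken cyclically in its cycle. -/
def unionCyclesToricSet (K : Type) [Field K] (l : ℕ) (kf mf : Fin l → ℕ) :
    Set ((i : Fin l) × (Fin (mf i) × Fin (kf i)) → K) :=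
  {y | ∃ x : (i : Fin l) × (Fin (mf i) × Fin (kf i)) → K, (∀ p, x p ≠ 0) ∧
    ∀ p : (i : Fin l) × (Fin (mf i) × Fin (kf i)),
      y p = x p * x ⟨p.1, (p.2.1, finRotate (kf p.1) p.2.2)⟩}

/-- The affine Hilbert function of a set `X ⊆ K^σ`:
`H_X(d) = dim_K S_{≤d} / I(X)_{≤d}`, where `S_{≤d}` is the space of polynomials of total
degree at most `d` and `I(X)_{≤d} = I(X) ∩ S_{≤d}`. -/
noncomputable def affineHilbertFunction (K : Type) [Field K] {σ : Type} (X : Set (σ → K))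
    (d : ℕ) : ℕ :=
  Module.finrank K
    (↥(MvPolynomial.restrictTotalDegree σ K d) ⧸
      Submodule.comap (MvPolynomial.restrictTotalDegree σ K d).subtype
        (Submodule.restrictScalars K (MvPolynomial.vanishingIdeal K X)))

section HilbertFunction

variable {K σ : Type} [Field K]

noncomputable def evalOn (X : Set (σ → K)) : MvPolynomial σ K →ₗ[K] X → K :=
  (LinearMap.funLeft K K Subtype.val).comp (evalₗ K σ)

lemma ker_evalOn (X : Set (σ → K)) :
    LinearMap.ker (evalOn X) = (vanishingIdeal K X).restrictScalars K := by
  ext f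
  simp [evalOn, mem_vanishingIdeal_iff, funext_iff, LinearMap.funLeft]

lemma affineHilbertFunction_eq_finrank_map (X : Set (σ → K)) (d : ℕ) :
    affineHilbertFunction K X d =
      Module.finrank K ((restrictTotalDegree σ K d).map (evalOn X)) := by
  rw [affineHilbertFunction, ← ker_evalOn, ← LinearMap.ker_domRestrict,
    ← LinearMap.range_domRestrict]
  exact ((evalOn X).domRestrict _).quotKerEquivRange.finrank_eq

lemma map_evalOn_restrictTotalDegree_eq_span (X : Set (σ → K)) (d : ℕ) :
    (restrictTotalDegree σ K d).map (evalOn X) =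
      Submodule.span K ((fun a => evalOn X (monomial a 1)) '' {a | a.degree ≤ d}) := by
  rw [restrictTotalDegree, restrictSupport, AddMonoidAlgebra.supported_eq_span_single,
    Submodule.map_span, Set.image_image]
  rfl

lemma range_evalOn_eq_top [Fintype K] [Finite σ] (X : Set (σ → K)) :
    LinearMap.range (evalOn X) = ⊤ := by
  have h : LinearMap.range (evalₗ K σ) = ⊤ :=
    top_unique ((map_restrict_dom_evalₗ K σ).symm.le.trans (LinearMap.map_le_range))
  rw [evalOn, LinearMap.range_comp, h, Submodule.map_top, LinearMap.range_eq_top]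
  exact LinearMap.funLeft_surjective_of_injective _ _ _ Subtype.val_injective

noncomputable def monomialChar (X : Submonoid (σ → K)) (a : σ →₀ ℕ) : X →* K where
  toFun x := eval (x : σ → K) (monomial a 1)
  map_one' := by simp [eval_monomial]
  map_mul' x y := by simp [eval_monomial, mul_pow, Finsupp.prod_mul]

lemma monomialChar_apply [Fintype σ] (X : Submonoid (σ → K)) (a : σ →₀ ℕ) (x : X) :
    monomialChar X a x = ∏ p, (x : σ → K) p ^ a p := by
  simp [monomialChar, eval_monomial, Finsupp.prod_fintype]

lemma range_evalOn_eq_span_monomialChar (X : Submonoid (σ → K)) :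
    LinearMap.range (evalOn (X : Set (σ → K))) =
      Submodule.span K (Set.range fun a => ⇑(monomialChar X a)) := by
  rw [LinearMap.range_eq_map, ← (basisMonomials σ K).span_eq, Submodule.map_span,
    ← Set.range_comp]
  rfl

lemma span_monomialChar_eq_top_iff [Fintype K] [Finite σ] (X : Submonoid (σ → K))
    (s : Set (σ →₀ ℕ)) :
    Submodule.span K ((fun a => ⇑(monomialChar X a)) '' s) = ⊤ ↔
      ∀ a, monomialChar X a ∈ monomialChar X '' s := by
  constructor
  · intro h a
    have hmem : ⇑(monomialChar X a) ∈ Submodule.span K ((⇑) '' (monomialChar X '' s)) := by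
      rw [Set.image_image, h]; trivial
    exact ((linearIndependent_monoidHom X K).linearIndepOn _).mem_span_iff.1 hmem
      ((linearIndependent_monoidHom X K).linearIndepOn _)
  · intro h
    rw [eq_top_iff, ← range_evalOn_eq_top (X : Set (σ → K)), range_evalOn_eq_span_monomialChar]
    refine Submodule.span_mono ?_
    rintro _ ⟨a, rfl⟩
    obtain ⟨b, hb, hba⟩ := h a
    exact ⟨b, hb, congrArg DFunLike.coe hba⟩

lemma affineHilbertFunction_eq_ncard_iff_map_eq_top [Finite K] [Finite σ] (X : Set (σ → K))
    (d : ℕ) : affineHilbertFunction K X d = X.ncard ↔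
      (restrictTotalDegree σ K d).map (evalOn X) = ⊤ := by
  classical
  have : Fintype X := Fintype.ofFinite X
  rw [affineHilbertFunction_eq_finrank_map, ← Nat.card_coe_set_eq, Nat.card_eq_fintype_card,
    ← Module.finrank_fintype_fun_eq_card K]
  exact ⟨Submodule.eq_top_of_finrank_eq, fun h => by rw [h, finrank_top]⟩

theorem affineHilbertFunction_eq_ncard_iff [Fintype K] [Fintype σ] (X : Submonoid (σ → K))
    (d : ℕ) : affineHilbertFunction K (X : Set (σ → K)) d = (X : Set (σ → K)).ncard ↔
      ∀ a : σ → ℕ, ∃ b : σ → ℕ, ∑ p, b p ≤ d ∧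
        ∀ x ∈ X, ∏ p, x p ^ a p = ∏ p, x p ^ b p := by
  rw [affineHilbertFunction_eq_ncard_iff_map_eq_top, map_evalOn_restrictTotalDegree_eq_span]
  refine (span_monomialChar_eq_top_iff X _).trans ?_
  simp only [Set.mem_image, Set.mem_ofPred_eq, DFunLike.ext_iff, monomialChar_apply,
    Finsupp.degree_eq_sum, Subtype.forall]
  rw [← Finsupp.equivFunOnFinite.symm.forall_congr_right]
  refine forall_congr' fun a => ?_
  rw [← Finsupp.equivFunOnFinite.symm.exists_congr_right]
  simp [eq_comm]

end HilbertFunction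

section Torus

variable {K σ : Type} [Field K]

lemma units_pow_eq_pow_iff_modEq (u : Kˣ) {m n : ℕ} :
    (u : K) ^ m = (u : K) ^ n ↔ m ≡ n [MOD orderOf u] := by
  rw [← Units.val_pow_eq_pow_val, ← Units.val_pow_eq_pow_val, Units.val_inj,
    pow_eq_pow_iff_modEq]

lemma prod_pow_eq_prod_pow_iff_modEq [Fintype K] [Fintype σ] (a b : σ → ℕ) :
    (∀ x : σ → K, (∀ p, x p ≠ 0) → ∏ p, x p ^ a p = ∏ p, x p ^ b p) ↔
      ∀ p, a p ≡ b p [MOD Fintype.card K - 1] := by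
  classical
  have hcard : Nat.card Kˣ = Fintype.card K - 1 := by
    rw [Nat.card_eq_fintype_card, Fintype.card_units]
  constructor
  · intro h p
    obtain ⟨g, hg⟩ := IsCyclic.exists_ofOrder_eq_natCard (α := Kˣ)
    have hprod (c : σ → ℕ) :
        ∏ p', (Pi.mulSingle p (g : K) : σ → K) p' ^ c p' = (g : K) ^ c p :=
      (Fintype.prod_eq_single p fun p' hp' => by simp [hp']).trans (by simp)
    have := h (Pi.mulSingle p (g : K)) fun p' => by
      by_cases hp' : p' = p <;> simp [hp']
    rwa [hprod, hprod, units_pow_eq_pow_iff_modEq, hg, hcard] at this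
  · intro h x hx
    refine Finset.prod_congr rfl fun p _ => ?_
    rw [← Units.val_mk0 (hx p), units_pow_eq_pow_iff_modEq]
    exact (h p).of_dvd (hcard ▸ orderOf_dvd_natCard _)

end Torus

section Toric

variable {K σ : Type} [Field K]

variable (K) in
/-- The toric set of the graph on `σ` whose edge `p` joins the vertices `p` and `π p`. -/
def toricSubmonoid (π : Equiv.Perm σ) : Submonoid (σ → K) where
  carrier := {y | ∃ x : σ → K, (∀ p, x p ≠ 0) ∧ ∀ p, y p = x p * x (π p)}
  one_mem' := ⟨1, fun _ => one_ne_zero, fun _ => (mul_one 1).symm⟩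
  mul_mem' := by
    rintro _ _ ⟨x, hx, hxe⟩ ⟨y, hy, hye⟩
    exact ⟨x * y, fun p => mul_ne_zero (hx p) (hy p), fun p => by
      simp only [Pi.mul_apply, hxe, hye]; ring⟩

lemma prod_mul_apply_perm_pow [Fintype σ] (π : Equiv.Perm σ) (x : σ → K) (a : σ → ℕ) :
    ∏ p, (x p * x (π p)) ^ a p = ∏ p, x p ^ (a p + a (π.symm p)) := by
  simp only [mul_pow, pow_add, Finset.prod_mul_distrib]
  rw [← Equiv.prod_comp π.symm fun p => x (π p) ^ a p]
  simp

theorem toricSubmonoid_prod_pow_eq_iff [Fintype K] [Fintype σ] (π : Equiv.Perm σ)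
    (a b : σ → ℕ) :
    (∀ y ∈ toricSubmonoid K π, ∏ p, y p ^ a p = ∏ p, y p ^ b p) ↔
      ∀ p, a (π p) + a p ≡ b (π p) + b p [MOD Fintype.card K - 1] := by
  have hparam : (∀ y ∈ toricSubmonoid K π, ∏ p, y p ^ a p = ∏ p, y p ^ b p) ↔
      ∀ x : σ → K, (∀ p, x p ≠ 0) →
        ∏ p, (x p * x (π p)) ^ a p = ∏ p, (x p * x (π p)) ^ b p := by
    refine ⟨fun h x hx => h _ ⟨x, hx, fun _ => rfl⟩, ?_⟩
    rintro h y ⟨x, hx, hxy⟩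
    simpa only [hxy] using h x hx
  simp only [hparam, prod_mul_apply_perm_pow, prod_pow_eq_prod_pow_iff_modEq]
  rw [← π.forall_congr_right]
  simp only [Equiv.symm_apply_apply, add_comm]

end Toric

section OddCycle

open Fin.NatCast in
theorem exists_add_self_eq_zero_of_finRotate_add_eq_zero {A : Type*} [AddCommGroup A] {k : ℕ}
    (hk : Odd k) (w : Fin k → A) (h : ∀ c, w (finRotate k c) + w c = 0) :
    ∃ e : A, e + e = 0 ∧ ∀ c, w c = e := by
  obtain ⟨γ, rfl⟩ := hk
  have hstep (m : ℕ) : w ((m + 1 : ℕ) : Fin (2 * γ + 1)) = -w (m : Fin (2 * γ + 1)) := by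
    rw [eq_neg_iff_add_eq_zero, ← h, finRotate_apply, Nat.cast_succ]
  have heven (m : ℕ) : w ((2 * m : ℕ) : Fin (2 * γ + 1)) = w 0 := by
    induction m with
    | zero => simp
    | succ m ih => rw [show 2 * (m + 1) = 2 * m + 1 + 1 by ring, hstep, hstep, neg_neg, ih]
  have hodd (m : ℕ) : w ((2 * m + 1 : ℕ) : Fin (2 * γ + 1)) = -w 0 := by rw [hstep, heven]
  have h2 : w 0 + w 0 = 0 := by
    have := hodd γ
    rw [Fin.natCast_self] at this
    rw [← neg_eq_iff_add_eq_zero, ← this]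
  refine ⟨w 0, h2, fun c => ?_⟩
  rw [← Fin.cast_val_eq_self c]
  obtain ⟨m, hm | hm⟩ := Nat.even_or_odd' c.val
  · rw [hm, heven]
  · rw [hm, hodd, neg_eq_of_add_eq_zero_left h2]

end OddCycle

namespace ZMod

variable {r : ℕ}

theorem natCast_add_self_eq_zero : (r : ZMod (2 * r)) + r = 0 := by
  rw [← Nat.cast_add, ← two_mul, natCast_self]

variable [NeZero r]

theorem val_natCast_half : (r : ZMod (2 * r)).val = r :=
  val_cast_of_lt (by have := NeZero.pos r; omega)

theorem val_add_natCast_half (x : ZMod (2 * r)) :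
    (x + r).val = if x.val < r then x.val + r else x.val - r := by
  have hr := val_natCast_half (r := r)
  have hx := x.val_lt
  split_ifs with h
  · rw [val_add_of_lt (by omega), hr]
  · have := val_add_val_of_le (a := x) (b := r) (by omega)
    omega

theorem eq_zero_or_eq_of_add_self_eq_zero {e : ZMod (2 * r)} (h : e + e = 0) :
    e = 0 ∨ e = r := by
  have h0 : (e + e).val = 0 := by rw [h, val_zero]
  by_cases he : e.val < r
  · rw [val_add_of_lt (by omega)] at h0
    exact Or.inl (val_eq_zero e |>.1 (by omega))
  · have := val_add_val_of_le (a := e) (b := e) (by omega)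
    exact Or.inr (val_injective _ (by rw [val_natCast_half]; omega))

end ZMod

section Block

open Finset ZMod

variable {r : ℕ} [NeZero r]

lemma sum_ite_eq_card_mul {ι : Type*} [Fintype ι] (P : ι → Prop) [DecidablePred P]
    (a b : ℕ) :
    ∑ c, (if P c then a else b) = #{c | P c} * a + #{c | ¬P c} * b := by
  simp [Finset.sum_ite]

theorem exists_add_self_eq_zero_sum_val_add_one_le {k γ : ℕ} (hk : k = 2 * γ + 1)
    (v : Fin k → ZMod (2 * r)) :
    ∃ e : ZMod (2 * r), e + e = 0 ∧ ∑ c, ((v c + e).val + 1) ≤ (k + γ) * r := by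
  classical
  set j := #{c | r ≤ (v c).val}
  have hj : j + #{c | ¬r ≤ (v c).val} = k := by
    simpa using card_filter_add_card_filter_not (s := univ) fun c => r ≤ (v c).val
  have h0 : ∑ c, ((v c).val + 1) ≤ k * r + j * r :=
    calc ∑ c, ((v c).val + 1) ≤ ∑ c, (r + if r ≤ (v c).val then r else 0) :=
          sum_le_sum fun c _ => by have := (v c).val_lt; split_ifs <;> omega
      _ = k * r + j * r := by simp [sum_add_distrib, sum_ite_eq_card_mul, j]
  have h1 : ∑ c, ((v c + r).val + 1) ≤ k * r + (k - j) * r :=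
    calc ∑ c, ((v c + r).val + 1) ≤ ∑ c, (r + if r ≤ (v c).val then 0 else r) :=
          sum_le_sum fun c _ => by
            have := (v c).val_lt; rw [val_add_natCast_half]; split_ifs <;> omega
      _ = k * r + (k - j) * r := by simp [sum_add_distrib, sum_ite_eq_card_mul, ← hj]
  by_cases hjγ : j ≤ γ
  · refine ⟨0, add_zero 0, ?_⟩
    simp only [add_zero]
    exact h0.trans (by rw [add_mul]; gcongr)
  · refine ⟨r, natCast_add_self_eq_zero, h1.trans ?_⟩
    rw [add_mul]; gcongr; omega

/-- The worst case for `exists_add_self_eq_zero_sum_val_add_one_le`: neither shift brings it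
below the bound. -/
def extremalBlock (r γ k : ℕ) (c : Fin k) : ZMod (2 * r) :=
  if (c : ℕ) < γ then ((2 * r - 1 : ℕ) : ZMod (2 * r)) else ((r - 1 : ℕ) : ZMod (2 * r))

theorem le_sum_val_extremalBlock_add {k γ : ℕ} (hk : k = 2 * γ + 1) {e : ZMod (2 * r)}
    (he : e + e = 0) : (k + γ) * r ≤ ∑ c, ((extremalBlock r γ k c + e).val + 1) := by
  classical
  have hr := NeZero.pos r
  have hhi : ((2 * r - 1 : ℕ) : ZMod (2 * r)).val = 2 * r - 1 := val_cast_of_lt (by omega)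
  have hlo : ((r - 1 : ℕ) : ZMod (2 * r)).val = r - 1 := val_cast_of_lt (by omega)
  have hγ : #{c : Fin k | (c : ℕ) < γ} = γ := by rw [Fin.card_filter_val_lt]; omega
  have hγ' : #{c : Fin k | ¬(c : ℕ) < γ} = γ + 1 := by
    have := card_filter_add_card_filter_not (s := (univ : Finset (Fin k))) fun c => (c : ℕ) < γ
    simp only [card_univ, Fintype.card_fin] at this
    omega
  rcases eq_zero_or_eq_of_add_self_eq_zero he with rfl | rfl
  · apply le_of_eq
    calc (k + γ) * r = ∑ c : Fin k, (if (c : ℕ) < γ then 2 * r else r) := by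
          rw [sum_ite_eq_card_mul, hγ, hγ']; subst hk; ring
      _ = ∑ c, ((extremalBlock r γ k c + 0).val + 1) := sum_congr rfl fun c _ => by
          rw [extremalBlock, add_zero]; split_ifs <;> omega
  · calc (k + γ) * r ≤ ∑ c : Fin k, (if (c : ℕ) < γ then r else 2 * r) := by
          rw [sum_ite_eq_card_mul, hγ, hγ']; subst hk; nlinarith
      _ = ∑ c, ((extremalBlock r γ k c + r).val + 1) := sum_congr rfl fun c _ => by
          rw [extremalBlock]; split_ifs <;> rw [val_add_natCast_half] <;> split_ifs <;> omega

end Block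

section UnionOfCycles

open Finset

variable {l : ℕ} {kf mf γf : Fin l → ℕ} {K : Type} [Field K] {r : ℕ}

abbrev CycleEdge (kf mf : Fin l → ℕ) : Type := (i : Fin l) × (Fin (mf i) × Fin (kf i))

def cycleRotation (kf mf : Fin l → ℕ) : Equiv.Perm (CycleEdge kf mf) :=
  Equiv.sigmaCongrRight fun i => Equiv.prodCongr (Equiv.refl _) (finRotate (kf i))

@[simp]
theorem cycleRotation_apply (i : Fin l) (j : Fin (mf i)) (c : Fin (kf i)) :
    cycleRotation kf mf ⟨i, (j, c)⟩ = ⟨i, (j, finRotate (kf i) c)⟩ :=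
  rfl

theorem coe_toricSubmonoid_cycleRotation :
    (toricSubmonoid K (cycleRotation kf mf) : Set _) = unionCyclesToricSet K l kf mf :=
  rfl

theorem sum_cycleEdge {M : Type*} [AddCommMonoid M] (f : CycleEdge kf mf → M) :
    ∑ p, f p = ∑ i, ∑ j, ∑ c, f ⟨i, (j, c)⟩ := by
  simp only [Fintype.sum_sigma, Fintype.sum_prod_type]

theorem toricSubmonoid_cycleRotation_prod_pow_eq_iff [Fintype K]
    (hr : Fintype.card K - 1 = 2 * r) (a b : CycleEdge kf mf → ℕ) :
    (∀ y ∈ toricSubmonoid K (cycleRotation kf mf), ∏ p, y p ^ a p = ∏ p, y p ^ b p) ↔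
      ∀ i j c, ((a ⟨i, (j, finRotate _ c)⟩ : ZMod (2 * r)) - b ⟨i, (j, finRotate _ c)⟩) +
        (a ⟨i, (j, c)⟩ - b ⟨i, (j, c)⟩) = 0 := by
  rw [toricSubmonoid_prod_pow_eq_iff, hr]
  simp only [← ZMod.natCast_eq_natCast_iff, Nat.cast_add, Sigma.forall, Prod.forall,
    cycleRotation_apply]
  refine forall₃_congr fun i j c => ?_
  rw [← sub_eq_zero]
  constructor <;> intro h <;> linear_combination h

theorem exists_sum_add_one_le_and_prod_pow_eq [Fintype K] [NeZero r]
    (hk : ∀ i, kf i = 2 * γf i + 1) (hr : Fintype.card K - 1 = 2 * r)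
    (a : CycleEdge kf mf → ℕ) :
    ∃ b : CycleEdge kf mf → ℕ,
      ∑ p, (b p + 1) ≤ ∑ i, mf i * ((kf i + γf i) * r) ∧
      ∀ y ∈ toricSubmonoid K (cycleRotation kf mf), ∏ p, y p ^ a p = ∏ p, y p ^ b p := by
  choose e he hsum using fun i (j : Fin (mf i)) =>
    exists_add_self_eq_zero_sum_val_add_one_le (hk i) fun c => (a ⟨i, (j, c)⟩ : ZMod (2 * r))
  refine ⟨fun p => ((a p : ZMod (2 * r)) + e p.1 p.2.1).val, ?_, ?_⟩
  · rw [sum_cycleEdge]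
    refine sum_le_sum fun i _ => ?_
    simpa using sum_le_sum fun j (_ : j ∈ univ) => hsum i j
  · rw [toricSubmonoid_cycleRotation_prod_pow_eq_iff hr]
    intro i j c
    simp only [ZMod.natCast_val, ZMod.cast_id', id]
    linear_combination -he i j

def extremalExponent (r : ℕ) (γf : Fin l → ℕ) (p : CycleEdge kf mf) : ℕ :=
  (extremalBlock r (γf p.1) (kf p.1) p.2.2).val

theorem le_sum_add_one_of_prod_pow_eq [Fintype K] [NeZero r] (hk : ∀ i, kf i = 2 * γf i + 1)
    (hr : Fintype.card K - 1 = 2 * r) (b : CycleEdge kf mf → ℕ)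
    (h : ∀ y ∈ toricSubmonoid K (cycleRotation kf mf),
      ∏ p, y p ^ extremalExponent r γf p = ∏ p, y p ^ b p) :
    ∑ i, mf i * ((kf i + γf i) * r) ≤ ∑ p, (b p + 1) := by
  rw [toricSubmonoid_cycleRotation_prod_pow_eq_iff hr] at h
  simp only [extremalExponent, ZMod.natCast_val, ZMod.cast_id', id] at h
  rw [sum_cycleEdge]
  refine sum_le_sum fun i _ => ?_
  have hblock (j : Fin (mf i)) : (kf i + γf i) * r ≤ ∑ c, (b ⟨i, (j, c)⟩ + 1) := by
    obtain ⟨e, he, hw⟩ := exists_add_self_eq_zero_of_finRotate_add_eq_zero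
      (hk i ▸ odd_two_mul_add_one _)
      (fun c => extremalBlock r (γf i) (kf i) c - b ⟨i, (j, c)⟩) (h i j)
    refine (le_sum_val_extremalBlock_add (hk i) he).trans (sum_le_sum fun c _ => ?_)
    have hb : (b ⟨i, (j, c)⟩ : ZMod (2 * r)) = extremalBlock r (γf i) (kf i) c + e := by
      linear_combination -(hw c) - he
    rw [hb.symm, ZMod.val_natCast]
    exact Nat.succ_le_succ (Nat.mod_le _ _)
  simpa using sum_le_sum fun j (_ : j ∈ univ) => hblock j

end UnionOfCycles

open Finset in
theorem regularity_unionCyclesToricSet_general (q l : ℕ) (kf mf γf : Fin l → ℕ)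
    (hk : ∀ i, kf i = 2 * γf i + 1)
    (K : Type) [Field K] [Fintype K] (hq : Fintype.card K = q) (hq2 : 2 ∣ q - 1) :
    IsLeast {p : ℕ | ∀ d : ℕ, p ≤ d →
        affineHilbertFunction K (unionCyclesToricSet K l kf mf) d =
          (unionCyclesToricSet K l kf mf).ncard}
      (∑ i : Fin l, (mf i * (kf i + γf i) * ((q - 1) / 2) - kf i * mf i)) := by
  obtain ⟨r, hr⟩ := hq2
  subst hq
  have : NeZero r := ⟨by have := Fintype.one_lt_card (α := K); omega⟩
  have hreg := affineHilbertFunction_eq_ncard_iff (toricSubmonoid K (cycleRotation kf mf))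
  rw [coe_toricSubmonoid_cycleRotation] at hreg
  have htarget : ∑ i, (mf i * (kf i + γf i) * ((Fintype.card K - 1) / 2) - kf i * mf i) +
      ∑ i, kf i * mf i = ∑ i, mf i * ((kf i + γf i) * r) := by
    rw [← sum_add_distrib, hr, Nat.mul_div_cancel_left _ two_pos]
    refine sum_congr rfl fun i _ => ?_
    rw [mul_assoc]
    refine Nat.sub_add_cancel ?_
    rw [mul_comm]
    gcongr
    nlinarith [NeZero.pos r]
  have hcard (b : CycleEdge kf mf → ℕ) :
      ∑ p, (b p + 1) = ∑ p, b p + ∑ i, kf i * mf i := by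
    simp [sum_add_distrib, mul_comm]
  refine ⟨fun d hd => (hreg d).2 fun a => ?_, fun p hp => ?_⟩
  · obtain ⟨b, hb, hab⟩ := exists_sum_add_one_le_and_prod_pow_eq hk hr a
    exact ⟨b, by linarith [hcard b], hab⟩
  · obtain ⟨b, hb, hab⟩ := (hreg p).1 (hp p le_rfl) (extremalExponent r γf)
    linarith [le_sum_add_one_of_prod_pow_eq hk hr b hab, hcard b]

/-- Let `𝒢 = 𝒢₁ ∪ ⋯ ∪ 𝒢_l`, where `𝒢_i` has `mf i` connected components,
each an odd cycle of length `kf i = 2·γf i + 1`. The regularity index of `I(X*_𝒢)` — the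
least `p ≥ 0` such that `H_{X*_𝒢}(d) = |X*_𝒢|` for all `d ≥ p` — equals
`Σ_{i=1}^{l} (mf i · (kf i + γf i) · (q−1)/2 − kf i · mf i)`. -/
theorem regularity_unionCyclesToricSet (q l : ℕ) (kf mf γf : Fin l → ℕ)
    (hγ : ∀ i, 1 ≤ γf i) (hk : ∀ i, kf i = 2 * γf i + 1) (hm : ∀ i, 1 ≤ mf i)
    (K : Type) [Field K] [Fintype K] (hq : Fintype.card K = q) (hq2 : 2 ∣ q - 1) :
    IsLeast {p : ℕ | ∀ d : ℕ, p ≤ d →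
        affineHilbertFunction K (unionCyclesToricSet K l kf mf) d =
          (unionCyclesToricSet K l kf mf).ncard}
      (∑ i : Fin l, (mf i * (kf i + γf i) * ((q - 1) / 2) - kf i * mf i)) :=
  regularity_unionCyclesToricSet_general q l kf mf γf hk K hq hq2
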